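/- arXiv:1907.04109 — 2 statements merged into one kernel-verified Lean document; each statement's English description precedes it below -/
import Mathlib

section
/- Let f ∈ X + X²ℂ[[X]] satisfy 2·f·f' = (f∘(2X))·((f')² − f·f'') (i.e. 𝔗²f(X) = f(2X)/2). Then there exist a, b ∈ ℂ such that (f')² = (1 − a·f²)·(1 − b·f²). (Equivalently, f(X) = Θ_k(AX)/A for some constants A, k ∈ ℂ, where Θ_k is the formal Jacobi elliptic sine; this is the uniqueness theorem: the only normalized formal power series solutions of 𝔗²f = f(2X)/2 are the scaled Jacobi elliptic functions.) -/
/-!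
Let `g = g_{a,b}` be the formal solution of `g'' = -(a + b) g + 2ab g³` with `g(0) = 0`,
`g'(0) = 1`. Differentiating shows that `g'² = (1 - a g²)(1 - b g²)`, hence
`g'² - g g'' = 1 - ab g⁴`, and `2 g g' / (1 - ab g⁴)` solves the same initial value problem as
`g(2X)`, namely `y'' = -4(a + b) y + 8ab y³`, `y(0) = 0`, `y'(0) = 2`. This duplication formula says
exactly that `g` solves `2 g g' = g(2X) (g'² - g g'')`.

Conversely, a normalized solution `f` is determined by its coefficients of `X³` and `X⁵`: if two
solutions agree below `X^(k+2)`, the coefficient of `X^(k+2)` in the difference of the two equations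
is `(2(k + 1)² - 2^(k+2))` times the difference of their coefficients of `X^(k+2)`, and this factor
vanishes only for `k = 1, 3`. Over `ℂ` one can choose `a, b` with
`a + b = -6 f₃` and `ab = 10 f₅ - 3 f₃²`, which makes `g_{a,b}` agree with `f` in these two
coefficients, so `f = g_{a,b}`.
-/

open PowerSeries

theorem Nat.sq_ne_two_pow {m : ℕ} (h₂ : m ≠ 2) (h₄ : m ≠ 4) : m ^ 2 ≠ 2 ^ m := by
  rcases Nat.lt_or_ge m 5 with hm | hm
  · interval_cases m <;> simp_all
  · clear h₂ h₄
    suffices m ^ 2 < 2 ^ m from this.ne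
    induction m, hm using Nat.le_induction with
    | base => norm_num
    | succ n hn ih => rw [pow_succ 2]; nlinarith

theorem sub_dvd_cubic_sub {R : Type*} [CommRing R] (α β y z : R) :
    y - z ∣ (α * y + β * y ^ 3) - (α * z + β * z ^ 3) :=
  ⟨α + β * (y ^ 2 + y * z + z ^ 2), by ring⟩

theorem exists_add_eq_and_mul_eq {K : Type*} [Field K] [IsAlgClosed K] [CharZero K] (s p : K) :
    ∃ a b, a + b = s ∧ a * b = p := by
  obtain ⟨w, hw⟩ := IsAlgClosed.exists_pow_nat_eq (s ^ 2 - 4 * p) two_pos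
  exact ⟨(s + w) / 2, (s - w) / 2, by ring, by linear_combination -hw / 4⟩

namespace PowerSeries

section CommSemiring

variable {R : Type*} [CommSemiring R]

theorem coeff_mul_of_X_pow_dvd {i j n : ℕ} {φ ψ : R⟦X⟧} (hφ : X ^ i ∣ φ) (hψ : X ^ j ∣ ψ)
    (hn : i + j = n) : coeff n (φ * ψ) = coeff i φ * coeff j ψ := by
  subst hn
  obtain ⟨φ, rfl⟩ := hφ
  obtain ⟨ψ, rfl⟩ := hψ
  rw [show X ^ i * φ * (X ^ j * ψ) = X ^ (i + j) * (φ * ψ) by ring]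
  have hX (k : ℕ) (χ : R⟦X⟧) : coeff k (X ^ k * χ) = coeff 0 χ := by
    simpa using coeff_X_pow_mul χ k 0
  simp only [hX, coeff_zero_eq_constantCoeff_apply, map_mul]

theorem coeff_pow_self_of_X_dvd {φ : R⟦X⟧} (h : X ∣ φ) (n : ℕ) :
    coeff n (φ ^ n) = coeff 1 φ ^ n := by
  obtain ⟨ψ, rfl⟩ := h
  rw [mul_pow, mul_comm X, coeff_succ_mul_X]
  simpa [coeff_zero_eq_constantCoeff] using coeff_X_pow_mul (ψ ^ n) n 0

theorem X_pow_dvd_derivative {n : ℕ} {φ : R⟦X⟧} (h : X ^ (n + 1) ∣ φ) :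
    X ^ n ∣ d⁄dX R φ := by
  rw [X_pow_dvd_iff] at h ⊢
  intro m hm
  rw [coeff_derivative, h (m + 1) (by omega), zero_mul]

theorem X_pow_dvd_rescale {n : ℕ} {φ : R⟦X⟧} (a : R) (h : X ^ n ∣ φ) :
    X ^ n ∣ rescale a φ := by
  rw [X_pow_dvd_iff] at h ⊢
  intro m hm
  rw [coeff_rescale, h m hm, mul_zero]

@[simp] theorem derivative_ofNat (n : ℕ) [n.AtLeastTwo] : d⁄dX R (ofNat(n) : R⟦X⟧) = 0 :=
  Derivation.map_natCast _ n

@[simp] theorem rescale_C (a r : R) : rescale a (C r) = C r := by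
  ext (_ | n) <;> simp [coeff_rescale, coeff_C]

theorem derivative_rescale (a : R) (φ : R⟦X⟧) :
    d⁄dX R (rescale a φ) = C a * rescale a (d⁄dX R φ) := by
  ext n
  simp only [coeff_derivative, coeff_rescale, coeff_C_mul, pow_succ]
  ring

theorem coeff_derivative_derivative (φ : R⟦X⟧) (m : ℕ) :
    coeff m (d⁄dX R (d⁄dX R φ)) = ((m + 2) * (m + 1) : R) * coeff (m + 2) φ := by
  rw [coeff_derivative, coeff_derivative]
  push_cast
  ring

end CommSemiring

theorem derivative_derivative_mul_pow_three_of_mul_eq {R : Type*} [CommRing R]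
    {h Q W : R⟦X⟧} (hW : h * Q = W) :
    d⁄dX R (d⁄dX R h) * Q ^ 3 = d⁄dX R (d⁄dX R W) * Q ^ 2 - 2 * d⁄dX R W * d⁄dX R Q * Q
      + 2 * W * d⁄dX R Q ^ 2 - W * Q * d⁄dX R (d⁄dX R Q) := by
  have h₁ := congrArg (d⁄dX R) hW
  have h₂ := congrArg (d⁄dX R) h₁
  simp only [Derivation.leibniz, map_add, smul_eq_mul] at h₁ h₂
  linear_combination Q ^ 2 * h₂ - 2 * Q * d⁄dX R Q * h₁
    + (2 * d⁄dX R Q ^ 2 - Q * d⁄dX R (d⁄dX R Q)) * hW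

section Field

variable {K : Type*} [Field K] (F : K⟦X⟧ → K⟦X⟧) (y₀ y₁ : K)

/-- When `y - z ∣ F y - F z`, the coefficient of `X^m` in `F y` depends only on the coefficients
of `y` up to `X^m`, so `F` may be applied to the truncation computed so far. -/
noncomputable def odeCoeff : ℕ → K
  | 0 => y₀
  | 1 => y₁
  | m + 2 => coeff m (F (mk fun i => if i ≤ m then odeCoeff i else 0)) / ((m + 2) * (m + 1))

noncomputable def odeSolution : K⟦X⟧ := mk (odeCoeff F y₀ y₁)

@[simp] theorem coeff_zero_odeSolution : coeff 0 (odeSolution F y₀ y₁) = y₀ := by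
  simp [odeSolution, odeCoeff]

@[simp] theorem coeff_one_odeSolution : coeff 1 (odeSolution F y₀ y₁) = y₁ := by
  simp [odeSolution, odeCoeff]

variable [CharZero K]

theorem derivative_derivative_odeSolution (hF : ∀ y z, y - z ∣ F y - F z) :
    d⁄dX K (d⁄dX K (odeSolution F y₀ y₁)) = F (odeSolution F y₀ y₁) := by
  ext m
  set y := odeSolution F y₀ y₁
  set t : K⟦X⟧ := mk fun i => if i ≤ m then odeCoeff F y₀ y₁ i else 0
  have hX : X ^ (m + 1) ∣ y - t := X_pow_dvd_iff.mpr fun i hi => by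
    simp [y, t, odeSolution, show i ≤ m by omega]
  have hFt : coeff m (F y) = coeff m (F t) := by
    rw [← sub_eq_zero, ← map_sub, X_pow_dvd_iff.mp (hX.trans (hF y t)) m m.lt_succ_self]
  rw [coeff_derivative_derivative, hFt]
  simp only [y, odeSolution, coeff_mk, odeCoeff]
  exact mul_div_cancel₀ _ (by norm_cast)

theorem eq_of_sub_dvd_derivative_derivative_sub {y z : K⟦X⟧}
    (hdvd : y - z ∣ d⁄dX K (d⁄dX K y) - d⁄dX K (d⁄dX K z))
    (h₀ : coeff 0 y = coeff 0 z) (h₁ : coeff 1 y = coeff 1 z) : y = z := by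
  ext n
  induction n using Nat.strong_induction_on with
  | _ n ih =>
    match n with
    | 0 => exact h₀
    | 1 => exact h₁
    | m + 2 =>
      have hX : X ^ (m + 2) ∣ y - z :=
        X_pow_dvd_iff.mpr fun i hi => by rw [map_sub, ih i hi, sub_self]
      have hm := X_pow_dvd_iff.mp (hX.trans hdvd) m (by omega)
      rw [← map_sub, ← map_sub, coeff_derivative_derivative, map_sub] at hm
      exact sub_eq_zero.mp ((mul_eq_zero.mp hm).resolve_left (by norm_cast))

end Field

end PowerSeries

section Jacobi

variable {K : Type*} [Field K]

/-- With `a = A²` and `b = k²A²` this is the scaled Jacobi elliptic sine `Θ_k(AX)/A`. -/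
noncomputable def scaledJacobiSn (a b : K) : K⟦X⟧ :=
  odeSolution (fun y => C (-(a + b)) * y + C (2 * a * b) * y ^ 3) 0 1

variable (a b : K)

@[simp] theorem constantCoeff_scaledJacobiSn : constantCoeff (scaledJacobiSn a b) = 0 := by
  rw [← coeff_zero_eq_constantCoeff_apply, scaledJacobiSn, coeff_zero_odeSolution]

@[simp] theorem coeff_one_scaledJacobiSn : coeff 1 (scaledJacobiSn a b) = 1 :=
  coeff_one_odeSolution ..

theorem X_dvd_scaledJacobiSn : X ∣ scaledJacobiSn a b := by
  rw [X_dvd_iff, constantCoeff_scaledJacobiSn]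

variable [CharZero K]

theorem derivative_derivative_scaledJacobiSn :
    d⁄dX K (d⁄dX K (scaledJacobiSn a b)) =
      C (-(a + b)) * scaledJacobiSn a b + C (2 * a * b) * scaledJacobiSn a b ^ 3 :=
  derivative_derivative_odeSolution _ _ _ fun _ _ => sub_dvd_cubic_sub ..

theorem derivative_scaledJacobiSn_sq :
    d⁄dX K (scaledJacobiSn a b) ^ 2 =
      (1 - C a * scaledJacobiSn a b ^ 2) * (1 - C b * scaledJacobiSn a b ^ 2) := by
  apply derivative.ext
  · simp only [Derivation.leibniz_pow, Derivation.leibniz, map_sub, map_mul, derivative_C,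
      Derivation.map_one_eq_zero, derivative_derivative_scaledJacobiSn, smul_eq_mul, map_neg,
      map_add, map_ofNat]
    ring
  · have h₁ : constantCoeff (d⁄dX K (scaledJacobiSn a b)) = 1 := by
      simp [← coeff_zero_eq_constantCoeff_apply, coeff_derivative]
    simp [h₁]

theorem coeff_three_scaledJacobiSn : coeff 3 (scaledJacobiSn a b) = -(a + b) / 6 := by
  have h := coeff_derivative_derivative (scaledJacobiSn a b) 1
  have h₃ : coeff 1 (scaledJacobiSn a b ^ 3) = 0 :=
    X_pow_dvd_iff.mp (pow_dvd_pow_of_dvd (X_dvd_scaledJacobiSn a b) 3) 1 (by norm_num)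
  rw [derivative_derivative_scaledJacobiSn, map_add, coeff_C_mul, coeff_C_mul, h₃] at h
  norm_num at h
  linear_combination -h / 6

theorem coeff_five_scaledJacobiSn :
    coeff 5 (scaledJacobiSn a b) = (a + b) ^ 2 / 120 + a * b / 10 := by
  have h := coeff_derivative_derivative (scaledJacobiSn a b) 3
  rw [derivative_derivative_scaledJacobiSn, map_add, coeff_C_mul, coeff_C_mul,
    coeff_pow_self_of_X_dvd (X_dvd_scaledJacobiSn a b), coeff_three_scaledJacobiSn,
    coeff_one_scaledJacobiSn] at h
  norm_num at h
  linear_combination -h / 20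

theorem derivative_derivative_rescale_two_scaledJacobiSn :
    d⁄dX K (d⁄dX K (rescale 2 (scaledJacobiSn a b))) =
      C (-4 * (a + b)) * rescale 2 (scaledJacobiSn a b)
        + C (8 * a * b) * rescale 2 (scaledJacobiSn a b) ^ 3 := by
  simp only [derivative_rescale, Derivation.leibniz, smul_eq_mul,
    derivative_derivative_scaledJacobiSn, map_add, map_mul, map_pow, rescale_C, map_neg, map_ofNat,
    derivative_ofNat, mul_zero, add_zero]
  ring

theorem derivative_derivative_of_mul_eq_two_mul_derivative {h : K⟦X⟧}
    (hh : h * (1 - C (a * b) * scaledJacobiSn a b ^ 4) =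
      2 * scaledJacobiSn a b * d⁄dX K (scaledJacobiSn a b)) :
    d⁄dX K (d⁄dX K h) = C (-4 * (a + b)) * h + C (8 * a * b) * h ^ 3 := by
  have hg'' := derivative_derivative_scaledJacobiSn a b
  have hg' := derivative_scaledJacobiSn_sq a b
  rw [map_mul] at hh
  set g := scaledJacobiSn a b
  set Q := 1 - C a * C b * g ^ 4
  have hQ : Q ≠ 0 := fun hQ => by simpa [Q, g] using congrArg constantCoeff hQ
  apply mul_right_cancel₀ (pow_ne_zero 3 hQ)
  rw [derivative_derivative_mul_pow_three_of_mul_eq hh]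
  simp only [Q, Derivation.leibniz_pow, Derivation.leibniz, map_sub, map_mul, derivative_C,
    Derivation.map_one_eq_zero, hg'', smul_eq_mul, map_neg, map_add, map_ofNat, map_zero,
    derivative_ofNat, nsmul_eq_mul, Nat.cast_ofNat]
  -- After clearing `Q³` the two sides agree only modulo the first integral `hg'`.
  linear_combination (24 * (C a * C b) ^ 2 * g ^ 7 - 24 * C a * C b * g ^ 3) * d⁄dX K g * hg'
    - (-4 * (C a + C b) * Q ^ 2 + 8 * C a * C b * (h ^ 2 * Q ^ 2 + h * Q * (2 * g * d⁄dX K g)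
      + (2 * g * d⁄dX K g) ^ 2)) * hh

theorem rescale_two_scaledJacobiSn_mul :
    rescale 2 (scaledJacobiSn a b) * (1 - C (a * b) * scaledJacobiSn a b ^ 4) =
      2 * scaledJacobiSn a b * d⁄dX K (scaledJacobiSn a b) := by
  set g := scaledJacobiSn a b
  set Q := 1 - C (a * b) * g ^ 4
  have hQ : constantCoeff Q = 1 := by simp [Q, g]
  obtain ⟨h, hh⟩ : ∃ h, h * Q = 2 * g * d⁄dX K g :=
    ⟨2 * g * d⁄dX K g * Q⁻¹, by
      rw [mul_assoc, PowerSeries.inv_mul_cancel _ (by simp [hQ]), mul_one]⟩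
  have hh₀ : constantCoeff h = 0 := by simpa [hQ, g] using congrArg constantCoeff hh
  have hh₁ : coeff 1 h = 2 := by
    have hX : X ^ 1 ∣ 2 * g := by simpa using (X_dvd_scaledJacobiSn a b).mul_left 2
    have h₁ := congrArg (coeff 1) hh
    rw [coeff_mul_of_X_pow_dvd (i := 1) (j := 0) (by simpa using X_dvd_iff.mpr hh₀) (by simp) rfl,
      coeff_mul_of_X_pow_dvd (j := 0) hX (by simp) rfl, ← map_ofNat C 2, coeff_C_mul] at h₁
    simpa [hQ, coeff_derivative, g] using h₁
  have hhG : h = rescale 2 g := by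
    refine eq_of_sub_dvd_derivative_derivative_sub ?_ (by simp [hh₀, g])
      (by simp [hh₁, coeff_rescale, g])
    rw [derivative_derivative_of_mul_eq_two_mul_derivative a b hh,
      derivative_derivative_rescale_two_scaledJacobiSn]
    exact sub_dvd_cubic_sub ..
  rw [← hhG, hh]

end Jacobi

section CommRing

variable {R : Type*} [CommRing R]

noncomputable def doublingDefect (f : R⟦X⟧) : R⟦X⟧ :=
  2 * f * d⁄dX R f - rescale 2 f * (d⁄dX R f ^ 2 - f * d⁄dX R (d⁄dX R f))

theorem doublingDefect_add_sub (g e : R⟦X⟧) :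
    doublingDefect (g + e) - doublingDefect g =
      C 2 * (e * d⁄dX R (g + e) + g * d⁄dX R e)
        - rescale 2 e * (d⁄dX R (g + e) ^ 2 - (g + e) * d⁄dX R (d⁄dX R (g + e)))
        - rescale 2 g * d⁄dX R e * (d⁄dX R (g + e) + d⁄dX R g)
        + rescale 2 g * e * d⁄dX R (d⁄dX R (g + e))
        + rescale 2 g * g * d⁄dX R (d⁄dX R e) := by
  simp only [doublingDefect, map_ofNat, map_add]
  ring

theorem coeff_doublingDefect_sub {f g : R⟦X⟧} (hf₀ : constantCoeff f = 0) (hf₁ : coeff 1 f = 1)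
    (hg₀ : constantCoeff g = 0) (hg₁ : coeff 1 g = 1) {k : ℕ} (hfg : X ^ (k + 2) ∣ f - g) :
    coeff (k + 2) (doublingDefect f - doublingDefect g) =
      (2 * (k + 1) ^ 2 - 2 ^ (k + 2)) * coeff (k + 2) (f - g) := by
  obtain ⟨e, rfl⟩ : ∃ e, f = g + e := ⟨f - g, by ring⟩
  rw [add_sub_cancel_left] at hfg ⊢
  have hX₀ (φ : R⟦X⟧) : X ^ 0 ∣ φ := by simp
  have hg : X ^ 1 ∣ g := by simpa using X_dvd_iff.mpr hg₀
  have hG : X ^ 1 ∣ rescale 2 g := X_pow_dvd_rescale 2 hg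
  have he' : X ^ (k + 1) ∣ d⁄dX R e := X_pow_dvd_derivative hfg
  have hf'₀ : constantCoeff (d⁄dX R (g + e)) = 1 := by
    rw [← coeff_zero_eq_constantCoeff_apply, coeff_derivative, hf₁]; simp
  have hg'₀ : constantCoeff (d⁄dX R g) = 1 := by
    rw [← coeff_zero_eq_constantCoeff_apply, coeff_derivative, hg₁]; simp
  have h₁ : coeff (k + 2) (e * d⁄dX R (g + e)) = coeff (k + 2) e := by
    rw [coeff_mul_of_X_pow_dvd hfg (hX₀ _) rfl, coeff_zero_eq_constantCoeff_apply, hf'₀, mul_one]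
  have h₂ : coeff (k + 2) (g * d⁄dX R e) = (k + 2) * coeff (k + 2) e := by
    rw [coeff_mul_of_X_pow_dvd hg he' (by omega), hg₁, coeff_derivative]
    push_cast; ring
  have h₃ : coeff (k + 2) (rescale 2 e * (d⁄dX R (g + e) ^ 2 - (g + e) * d⁄dX R (d⁄dX R (g + e)))) =
      2 ^ (k + 2) * coeff (k + 2) e := by
    rw [coeff_mul_of_X_pow_dvd (X_pow_dvd_rescale 2 hfg) (hX₀ _) rfl, coeff_rescale,
      coeff_zero_eq_constantCoeff_apply, map_sub, map_mul, map_pow, hf'₀, hf₀]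
    ring
  have h₄ : coeff (k + 2) (rescale 2 g * d⁄dX R e * (d⁄dX R (g + e) + d⁄dX R g)) =
      4 * (k + 2) * coeff (k + 2) e := by
    rw [coeff_mul_of_X_pow_dvd (pow_add (X : R⟦X⟧) 1 (k + 1) ▸ mul_dvd_mul hG he') (hX₀ _)
        (by omega), coeff_mul_of_X_pow_dvd hG he' (by omega), coeff_zero_eq_constantCoeff_apply,
      map_add, hf'₀, hg'₀, coeff_rescale, coeff_derivative, hg₁]
    push_cast; ring
  have h₅ : coeff (k + 2) (rescale 2 g * e * d⁄dX R (d⁄dX R (g + e))) = 0 :=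
    X_pow_dvd_iff.mp (dvd_mul_of_dvd_left (pow_add (X : R⟦X⟧) 1 (k + 2) ▸ mul_dvd_mul hG hfg) _)
      (k + 2) (by omega)
  have h₆ : coeff (k + 2) (rescale 2 g * g * d⁄dX R (d⁄dX R e)) =
      2 * (k + 2) * (k + 1) * coeff (k + 2) e := by
    rw [coeff_mul_of_X_pow_dvd (pow_add (X : R⟦X⟧) 1 1 ▸ mul_dvd_mul hG hg)
        (X_pow_dvd_derivative he') (by omega), coeff_mul_of_X_pow_dvd hG hg rfl, coeff_rescale,
      hg₁, coeff_derivative_derivative]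
    ring
  rw [doublingDefect_add_sub, map_add, map_add, map_sub, map_sub, coeff_C_mul, map_add,
    h₁, h₂, h₃, h₄, h₅, h₆]
  ring

end CommRing

theorem doublingDefect_scaledJacobiSn {K : Type*} [Field K] [CharZero K] (a b : K) :
    doublingDefect (scaledJacobiSn a b) = 0 := by
  have hg'' := derivative_derivative_scaledJacobiSn a b
  have hg' := derivative_scaledJacobiSn_sq a b
  have hdup := rescale_two_scaledJacobiSn_mul a b
  simp only [map_mul, map_neg, map_add, map_ofNat] at hg'' hdup
  rw [doublingDefect]
  linear_combination -hdup - rescale 2 (scaledJacobiSn a b) * (hg' - scaledJacobiSn a b * hg'')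

theorem eq_of_doublingDefect_eq_zero {K : Type*} [Field K] [CharZero K] {f g : K⟦X⟧}
    (hf₀ : constantCoeff f = 0) (hf₁ : coeff 1 f = 1) (hg₀ : constantCoeff g = 0)
    (hg₁ : coeff 1 g = 1) (hf : doublingDefect f = 0) (hg : doublingDefect g = 0)
    (h₃ : coeff 3 f = coeff 3 g) (h₅ : coeff 5 f = coeff 5 g) : f = g := by
  ext n
  induction n using Nat.strong_induction_on with
  | _ n ih =>
    match n with
    | 0 => simp [hf₀, hg₀]
    | 1 => rw [hf₁, hg₁]
    | k + 2 =>
      by_cases hk : k = 1 ∨ k = 3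
      · rcases hk with rfl | rfl
        exacts [h₃, h₅]
      have hfg : X ^ (k + 2) ∣ f - g :=
        X_pow_dvd_iff.mpr fun i hi => by rw [map_sub, ih i hi, sub_self]
      have hne : (2 * (k + 1) ^ 2 - 2 ^ (k + 2) : K) ≠ 0 := by
        have : (k + 1) ^ 2 ≠ 2 ^ (k + 1) := Nat.sq_ne_two_pow (by omega) (by omega)
        rw [pow_succ' 2 (k + 1), ← mul_sub, mul_ne_zero_iff]
        exact ⟨two_ne_zero, sub_ne_zero.mpr (by exact_mod_cast this)⟩
      have h := coeff_doublingDefect_sub hf₀ hf₁ hg₀ hg₁ hfg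
      rw [hf, hg, sub_self, map_zero, map_sub] at h
      exact sub_eq_zero.mp ((mul_eq_zero.mp h.symm).resolve_left hne)

theorem exists_eq_scaledJacobiSn_of_doublingDefect_eq_zero {K : Type*} [Field K] [IsAlgClosed K]
    [CharZero K] {f : K⟦X⟧} (hf₀ : constantCoeff f = 0) (hf₁ : coeff 1 f = 1)
    (hf : doublingDefect f = 0) : ∃ a b, f = scaledJacobiSn a b := by
  obtain ⟨a, b, hs, hp⟩ :=
    exists_add_eq_and_mul_eq (-6 * coeff 3 f) (10 * coeff 5 f - 3 * coeff 3 f ^ 2)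
  refine ⟨a, b, eq_of_doublingDefect_eq_zero hf₀ hf₁ (constantCoeff_scaledJacobiSn a b)
    (coeff_one_scaledJacobiSn a b) hf (doublingDefect_scaledJacobiSn a b) ?_ ?_⟩
  · rw [coeff_three_scaledJacobiSn, hs]; ring
  · rw [coeff_five_scaledJacobiSn, hs, hp]; ring

/-- **Theorem 1.2 (uniqueness).** If `f ∈ X + X²ℂ[[X]]` satisfies
`𝔗²f(X) = f(2X)/2`, i.e. `2·f·f' = (f∘(2X))·((f')² − f·f'')`, then there exist
`a, b ∈ ℂ` with `(f')² = (1 − a·f²)·(1 − b·f²)`; equivalently `f = Θ_k(AX)/A`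
is a scaled formal Jacobi elliptic sine (with `a = A²`, `b = k²A²`). -/
theorem statement8 (f : PowerSeries ℂ)
    (h0 : coeff 0 f = 0) (h1 : coeff 1 f = 1)
    (heq : 2 * f * d⁄dX ℂ f =
      rescale 2 f * ((d⁄dX ℂ f) ^ 2 - f * d⁄dX ℂ (d⁄dX ℂ f))) :
    ∃ a b : ℂ, (d⁄dX ℂ f) ^ 2 = (1 - C a * f ^ 2) * (1 - C b * f ^ 2) := by
  obtain ⟨a, b, rfl⟩ := exists_eq_scaledJacobiSn_of_doublingDefect_eq_zero
    (coeff_zero_eq_constantCoeff_apply f ▸ h0) h1 (sub_eq_zero_of_eq heq)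
  exact ⟨a, b, derivative_scaledJacobiSn_sq a b⟩
end

section
/- Let f ∈ X + X²ℂ[[X]]. Suppose F ∈ X + X²ℂ[[X]] satisfies F = f·F' (i.e. F = 𝔗⁻¹f) and H ∈ X + X²ℂ[[X]] is the compositional inverse of F (H∘F = X). Define the binomial-type polynomials P_n ∈ ℂ[α] associated to 𝔗⁻¹f by P_n(α) := n!·Σ_{k=0}^{n} (αᵏ/k!)·coeff_n(Hᵏ), so that Σ_n P_n(α)Xⁿ/n! = exp(α·H(X)). For a power series u = Σ_k c_kXᵏ and a polynomial P, define u(D)P := Σ_k c_k·P^{(k)} (a finite sum), and let L : ℂ[α] → ℂ[α] be the linear operator L(P)(α) := α·(f(D)P)(α). Then for every monic polynomial q of degree n: n!·P_n = (L ∘ (L − 1·id) ∘ (L − 2·id) ∘ ⋯ ∘ (L − (n−1)·id))(q). In symbols: p_n^{𝔗⁻¹f}(α) = (1/n!)·(α·f(D))_n · q_n(α) for any monic q_n of degree n, where (·)_n is the falling factorial of the operator. -/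
open PowerSeries Finset

/-- Composition `f ∘ g` of formal power series (intended for `g` with zero constant
term). -/
noncomputable def pcomp (f g : PowerSeries ℂ) : PowerSeries ℂ :=
  PowerSeries.mk fun n => ∑ k ∈ range (n + 1), coeff k f * coeff n (g ^ k)

/-- `u(D)P = Σ_k (coeff_k u)·P⁽ᵏ⁾` for a power series `u` and a polynomial `P`
(a finite sum, since derivatives of order `> deg P` vanish). -/
noncomputable def opD (u : PowerSeries ℂ) (P : Polynomial ℂ) : Polynomial ℂ :=
  ∑ k ∈ range (P.natDegree + 1), coeff k u • (Polynomial.derivative^[k] P)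

/-- The operator `L : P(α) ↦ α·(f(D)P)(α)`. -/
noncomputable def LOp (f : PowerSeries ℂ) (P : Polynomial ℂ) : Polynomial ℂ :=
  Polynomial.X * opD f P

/-- The falling-factorial composition `(L)_n = L ∘ (L − 1·id) ∘ ⋯ ∘ (L − (n−1)·id)`;
the factor `L − (n−1)·id` acts first. -/
noncomputable def fallOp (L : Polynomial ℂ → Polynomial ℂ) : ℕ → Polynomial ℂ → Polynomial ℂ
  | 0, q => q
  | n + 1, q => fallOp L n (L q - (n : ℂ) • q)

/-!
Differentiating `H ∘ F = X` gives `H'(F)·F' = 1`, hence `f = F·H'(F)` and, composing with the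
inverse `H`, the functional equation `f ∘ H = X·H'`. Formally
`L exp(αH) = α f(H) exp(αH) = X ∂_X exp(αH)`, so `L P_n = n P_n`; on coefficients this is
`n·[Xⁿ]H^{j+1} = (j+1)·Σ_k [X^k]f·[Xⁿ]H^{j+k}`, which follows from `X ∂_X H^{j+1} = (j+1)H^j·f(H)`.
Since `f = X + O(X²)`, `L` is triangular on monomials with `L αᵐ = m αᵐ + (lower terms)`, so the
falling factorial `(L)_n` kills every polynomial of degree `< n`. As `q - P_n` has degree `< n`,
`(L)_n q = (L)_n P_n = n(n-1)⋯1 · P_n`.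
-/

section Substitution

variable {R : Type*} [CommRing R]

theorem coeff_pow_of_lt {g : PowerSeries R} (hg : constantCoeff g = 0) {n k : ℕ} (h : n < k) :
    coeff n (g ^ k) = 0 := by
  obtain ⟨g', rfl⟩ := X_dvd_iff.mpr hg
  rw [mul_pow, coeff_X_pow_mul', if_neg (not_le.mpr h)]

theorem coeff_pow_self {g : PowerSeries R} (hg : constantCoeff g = 0) (n : ℕ) :
    coeff n (g ^ n) = coeff 1 g ^ n := by
  obtain ⟨g', rfl⟩ := X_dvd_iff.mpr hg
  rw [mul_pow, coeff_X_pow_mul', if_pos le_rfl, Nat.sub_self, coeff_zero_eq_constantCoeff_apply,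
    map_pow, ← zero_add 1, coeff_succ_X_mul, coeff_zero_eq_constantCoeff_apply]

theorem coeff_mul_subst {g : PowerSeries R} (hg : constantCoeff g = 0) {n N : ℕ} (hn : n < N)
    (a b : PowerSeries R) :
    coeff n (b * a.subst g) = ∑ k ∈ range N, coeff k a * coeff n (b * g ^ k) := by
  have hsub : HasSubst g := HasSubst.of_constantCoeff_zero' hg
  obtain ⟨g', hg'⟩ := X_dvd_iff.mpr hg
  obtain ⟨M, rfl⟩ : ∃ M, N = M + 1 := ⟨N - 1, by omega⟩
  conv_lhs => rw [eq_X_pow_mul_shift_add_trunc (M + 1) a]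
  rw [subst_add hsub, subst_mul hsub, subst_pow hsub, subst_X hsub, subst_coe hsub,
    Polynomial.aeval_eq_sum_range' (natDegree_trunc_lt a M), mul_add, map_add, hg', mul_pow,
    mul_left_comm, mul_assoc, coeff_X_pow_mul', if_neg (not_le.mpr hn), zero_add,
    mul_sum, map_sum, ← hg']
  refine sum_congr rfl fun k hk => ?_
  rw [coeff_trunc, if_pos (mem_range.mp hk), mul_smul_comm, coeff_smul, smul_eq_mul]

theorem subst_eq_X_of_subst_eq_X {F H : PowerSeries R} (hF0 : constantCoeff F = 0)
    (hF1 : IsUnit (coeff 1 F)) (hH : H.subst F = X) :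
    F.subst H = X := by
  set G := F.substInvOfIsUnit hF1
  have hFG : F.subst G = X := subst_substInvOfIsUnit_right F hF0 hF1
  have hHG : H = G := by
    calc H = H.subst (F.subst G) := by rw [hFG, X_subst]
      _ = G := by
        rw [← subst_comp_subst_apply (HasSubst.of_constantCoeff_zero' hF0)
          (HasSubst.substInvOfIsUnit F hF1), hH, subst_X (HasSubst.substInvOfIsUnit F hF1)]
  rw [hHG, hFG]

theorem subst_eq_X_mul_derivative {f F H : PowerSeries R} (hF0 : constantCoeff F = 0)
    (hF1 : IsUnit (coeff 1 F)) (hH0 : constantCoeff H = 0) (hF : F = f * d⁄dX R F)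
    (hH : H.subst F = X) :
    f.subst H = X * d⁄dX R H := by
  have hFsub : HasSubst F := HasSubst.of_constantCoeff_zero' hF0
  have hHsub : HasSubst H := HasSubst.of_constantCoeff_zero' hH0
  have hchain : (d⁄dX R H).subst F * d⁄dX R F = 1 := by
    rw [← derivative_subst hFsub, hH, derivative_X]
  have hf : f = F * (d⁄dX R H).subst F := by
    linear_combination (-f) * hchain - (d⁄dX R H).subst F * hF
  rw [hf, subst_mul hHsub, subst_comp_subst_apply hFsub hHsub,
    subst_eq_X_of_subst_eq_X hF0 hF1 hH, X_subst]

theorem coeff_X_mul_derivative (φ : PowerSeries R) (n : ℕ) :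
    coeff n (X * d⁄dX R φ) = n * coeff n φ := by
  cases n with
  | zero => simp
  | succ n => rw [coeff_succ_X_mul, coeff_derivative, mul_comm]; push_cast; ring

theorem natCast_mul_coeff_pow_succ {f H : PowerSeries R} (hH0 : constantCoeff H = 0)
    (hfH : f.subst H = X * d⁄dX R H) (n j : ℕ) :
    (n : R) * coeff n (H ^ (j + 1)) =
      (j + 1 : R) * ∑ k ∈ range (n + 1), coeff k f * coeff n (H ^ (j + k)) := by
  have hpow : X * d⁄dX R (H ^ (j + 1)) = C (j + 1 : R) * (H ^ j * (X * d⁄dX R H)) := by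
    rw [Derivation.leibniz_pow, nsmul_eq_mul, Nat.add_sub_cancel, smul_eq_mul, map_add, map_one,
      map_natCast]
    push_cast
    ring
  simp_rw [pow_add H j, ← coeff_mul_subst hH0 (Nat.lt_succ_self n), hfH, ← coeff_C_mul, ← hpow,
    coeff_X_mul_derivative, coeff_C_mul, pow_one, ← pow_succ]

end Substitution

theorem pcomp_eq_subst {a g : PowerSeries ℂ} (hg : constantCoeff g = 0) :
    pcomp a g = a.subst g := by
  ext n
  rw [pcomp, coeff_mk, ← one_mul (a.subst g), coeff_mul_subst hg (Nat.lt_succ_self n)]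
  simp_rw [one_mul]

theorem opD_eq_sum_range (u : PowerSeries ℂ) {P : Polynomial ℂ} {N : ℕ} (hN : P.natDegree ≤ N) :
    opD u P = ∑ k ∈ range (N + 1), coeff k u • Polynomial.derivative^[k] P := by
  refine sum_subset (range_subset_range.mpr (by omega)) fun k _ hk => ?_
  rw [Polynomial.iterate_derivative_eq_zero (by simp at hk; omega), smul_zero]

noncomputable def LOpLinear (f : PowerSeries ℂ) : Module.End ℂ (Polynomial ℂ) where
  toFun := LOp f
  map_add' p q := by
    simp only [LOp, opD_eq_sum_range f (Polynomial.natDegree_add_le p q),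
      opD_eq_sum_range f (le_max_left p.natDegree q.natDegree),
      opD_eq_sum_range f (le_max_right p.natDegree q.natDegree),
      iterate_map_add, smul_add, sum_add_distrib, mul_add]
  map_smul' c p := by
    rw [LOp, LOp, opD_eq_sum_range f (Polynomial.natDegree_smul_le c p), opD]
    simp only [Polynomial.iterate_derivative_smul, smul_comm _ c, ← smul_sum, RingHom.id_apply,
      mul_smul_comm]

theorem coeff_LOp_zero (u : PowerSeries ℂ) (P : Polynomial ℂ) : (LOp u P).coeff 0 = 0 := by
  rw [LOp, Polynomial.mul_coeff_zero, Polynomial.coeff_X_zero, zero_mul]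

theorem coeff_LOp_succ (u : PowerSeries ℂ) {P : Polynomial ℂ} {N : ℕ} (hN : P.natDegree ≤ N)
    (j : ℕ) :
    (LOp u P).coeff (j + 1) =
      ∑ k ∈ range (N + 1), coeff k u * ((j + k).descFactorial k * P.coeff (j + k)) := by
  rw [LOp, Polynomial.coeff_X_mul, opD_eq_sum_range u hN, Polynomial.finsetSum_coeff]
  simp only [Polynomial.coeff_smul, Polynomial.coeff_iterate_derivative, smul_eq_mul,
    nsmul_eq_mul]

theorem degree_LOp_sub_lt {f : PowerSeries ℂ} (hf0 : coeff 0 f = 0) (hf1 : coeff 1 f = 1)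
    {m : ℕ} {q : Polynomial ℂ} (hq : q.degree ≤ m) :
    (LOp f q - (m : ℂ) • q).degree < m := by
  have hdeg : q.natDegree ≤ m + 1 := (Polynomial.natDegree_le_of_degree_le hq).trans m.le_succ
  rw [Polynomial.degree_lt_iff_coeff_zero]
  intro j hj
  rw [Polynomial.coeff_sub, Polynomial.coeff_smul, smul_eq_mul, sub_eq_zero]
  rcases j with _ | i
  · obtain rfl : m = 0 := by omega
    rw [coeff_LOp_zero, Nat.cast_zero, zero_mul]
  have hdiag : ((i + 1 : ℕ) : ℂ) * q.coeff (i + 1) = m * q.coeff (i + 1) := by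
    rcases hj.eq_or_lt with rfl | hlt
    · rfl
    · rw [Polynomial.coeff_eq_zero_of_degree_lt (hq.trans_lt (by exact_mod_cast hlt)),
        mul_zero, mul_zero]
  rw [coeff_LOp_succ f hdeg i, sum_eq_single 1, hf1, one_mul, Nat.descFactorial_one, hdiag]
  · rintro (_ | _ | k) _ hk1
    · rw [hf0, zero_mul]
    · exact absurd rfl hk1
    · rw [Polynomial.coeff_eq_zero_of_degree_lt (hq.trans_lt (by norm_cast; omega)),
        mul_zero, mul_zero]
  · simp

theorem degree_sub_lt_of_monic {R : Type*} [Ring R] [Nontrivial R] {p q : Polynomial R}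
    (hp : p.Monic) (hq : q.Monic) (h : p.natDegree = q.natDegree) :
    (p - q).degree < p.natDegree := by
  rw [← Polynomial.degree_eq_natDegree hp.ne_zero]
  refine Polynomial.degree_sub_lt_left ?_ hp.ne_zero (by rw [hp.leadingCoeff, hq.leadingCoeff])
  rw [Polynomial.degree_eq_natDegree hp.ne_zero, Polynomial.degree_eq_natDegree hq.ne_zero, h]

theorem fallOp_eq_zero_of_degree_lt {L : Polynomial ℂ → Polynomial ℂ}
    (hL : ∀ (m : ℕ) (q : Polynomial ℂ), q.degree ≤ m → (L q - (m : ℂ) • q).degree < m) :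
    ∀ (n : ℕ) (q : Polynomial ℂ), q.degree < n → fallOp L n q = 0
  | 0, _, hq => Polynomial.degree_eq_bot.mp (Nat.WithBot.lt_zero_iff.mp hq)
  | n + 1, q, hq => fallOp_eq_zero_of_degree_lt hL n _ (hL n q (Order.le_of_lt_succ hq))

theorem fallOp_eq_aeval_descPochhammer (L : Module.End ℂ (Polynomial ℂ)) (n : ℕ) :
    fallOp L n = Polynomial.aeval L (descPochhammer ℂ n) := by
  induction n with
  | zero => funext q; simp [fallOp]
  | succ n ih =>
    funext q
    rw [fallOp, ih, descPochhammer_succ_right, map_mul, Module.End.mul_apply,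
      map_sub (Polynomial.aeval (R := ℂ) L), Polynomial.aeval_X, map_natCast, LinearMap.sub_apply,
      Module.End.natCast_apply, Nat.cast_smul_eq_nsmul]

section BinomialType

noncomputable def binomialTypePoly (H : PowerSeries ℂ) (n : ℕ) : Polynomial ℂ :=
  (n.factorial : ℂ) •
    ∑ k ∈ range (n + 1), (coeff n (H ^ k) / (k.factorial : ℂ)) • (Polynomial.X ^ k : Polynomial ℂ)

variable {H : PowerSeries ℂ}

theorem factorial_mul_coeff_binomialTypePoly (hH0 : constantCoeff H = 0) (n j : ℕ) :
    (j.factorial : ℂ) * (binomialTypePoly H n).coeff j = n.factorial * coeff n (H ^ j) := by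
  simp only [binomialTypePoly, Polynomial.coeff_smul, Polynomial.finsetSum_coeff,
    Polynomial.coeff_X_pow, smul_eq_mul, mul_ite, mul_one, mul_zero, sum_ite_eq, mem_range]
  split_ifs with hj
  · have : (j.factorial : ℂ) ≠ 0 := Nat.cast_ne_zero.mpr j.factorial_ne_zero
    field_simp
  · simp only [coeff_pow_of_lt hH0 (by omega : n < j), mul_zero]

theorem natDegree_binomialTypePoly_le (hH0 : constantCoeff H = 0) (n : ℕ) :
    (binomialTypePoly H n).natDegree ≤ n := by
  refine Polynomial.natDegree_le_iff_coeff_eq_zero.mpr fun j hj => ?_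
  have h := factorial_mul_coeff_binomialTypePoly hH0 n j
  rwa [coeff_pow_of_lt hH0 hj, mul_zero,
    mul_eq_zero_iff_left (Nat.cast_ne_zero.mpr j.factorial_ne_zero)] at h

theorem coeff_binomialTypePoly_self (hH0 : constantCoeff H = 0) (hH1 : coeff 1 H = 1)
    (n : ℕ) : (binomialTypePoly H n).coeff n = 1 := by
  have h := factorial_mul_coeff_binomialTypePoly hH0 n n
  rwa [coeff_pow_self hH0, hH1, one_pow, mul_one,
    mul_eq_left₀ (Nat.cast_ne_zero.mpr n.factorial_ne_zero)] at h

theorem binomialTypePoly_monic (hH0 : constantCoeff H = 0) (hH1 : coeff 1 H = 1) (n : ℕ) :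
    (binomialTypePoly H n).Monic :=
  Polynomial.monic_of_natDegree_le_of_coeff_eq_one n (natDegree_binomialTypePoly_le hH0 n)
    (coeff_binomialTypePoly_self hH0 hH1 n)

theorem natDegree_binomialTypePoly (hH0 : constantCoeff H = 0) (hH1 : coeff 1 H = 1) (n : ℕ) :
    (binomialTypePoly H n).natDegree = n :=
  Polynomial.natDegree_eq_of_le_of_coeff_ne_zero (natDegree_binomialTypePoly_le hH0 n)
    (by rw [coeff_binomialTypePoly_self hH0 hH1 n]; exact one_ne_zero)

theorem LOp_binomialTypePoly {f : PowerSeries ℂ} (hH0 : constantCoeff H = 0)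
    (hfH : f.subst H = X * d⁄dX ℂ H) (n : ℕ) :
    LOp f (binomialTypePoly H n) = (n : ℂ) • binomialTypePoly H n := by
  set P := binomialTypePoly H n
  ext (_ | i)
  · have h := factorial_mul_coeff_binomialTypePoly hH0 n 0
    rw [Nat.factorial_zero, Nat.cast_one, one_mul] at h
    rw [coeff_LOp_zero, Polynomial.coeff_smul, h, pow_zero, coeff_one]
    split_ifs with hn <;> simp [hn]
  have hterm : ∀ k, (i.factorial : ℂ) * ((i + k).descFactorial k * P.coeff (i + k)) =
      n.factorial * coeff n (H ^ (i + k)) := by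
    intro k
    rw [← factorial_mul_coeff_binomialTypePoly hH0, ← mul_assoc, ← Nat.cast_mul,
      ← Nat.factorial_mul_descFactorial (Nat.le_add_left k i), Nat.add_sub_cancel]
  apply mul_left_cancel₀ (Nat.cast_ne_zero.mpr (i + 1).factorial_ne_zero)
  calc ((i + 1).factorial : ℂ) * (LOp f P).coeff (i + 1)
      = (i + 1 : ℂ) * ∑ k ∈ range (n + 1), coeff k f *
          ((i.factorial : ℂ) * ((i + k).descFactorial k * P.coeff (i + k))) := by
        rw [coeff_LOp_succ f (natDegree_binomialTypePoly_le hH0 n), Nat.factorial_succ, mul_sum,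
          mul_sum]
        push_cast
        refine sum_congr rfl fun k _ => by ring
    _ = (n : ℂ) * (n.factorial * coeff n (H ^ (i + 1))) := by
        simp_rw [hterm, mul_left_comm (n : ℂ), natCast_mul_coeff_pow_succ hH0 hfH, mul_sum]
        refine sum_congr rfl fun k _ => by ring
    _ = ((i + 1).factorial : ℂ) * ((n : ℂ) • P).coeff (i + 1) := by
        rw [← factorial_mul_coeff_binomialTypePoly hH0, Polynomial.coeff_smul, smul_eq_mul]
        ring

end BinomialType

/-- **Proposition 3.1.** Let `f ∈ X + X²ℂ[[X]]`, let `F = 𝔗⁻¹f` (normalized,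
`F = f·F'`) with compositional inverse `H`, and let
`P_n(α) = n!·Σ_{k≤n} (αᵏ/k!)·coeff_n(Hᵏ)` be the binomial-type polynomials
associated to `𝔗⁻¹f`.  Then for every monic polynomial `q` of degree `n`:
`n!·P_n = (α·f(D))_n · q`, the falling factorial of the operator `L = α·f(D)`. -/
theorem statement17 (f F H : PowerSeries ℂ)
    (hf0 : coeff 0 f = 0) (hf1 : coeff 1 f = 1)
    (hF0 : coeff 0 F = 0) (hF1 : coeff 1 F = 1)
    (hH0 : coeff 0 H = 0) (hH1 : coeff 1 H = 1)
    (hF : F = f * d⁄dX ℂ F)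
    (hH : pcomp H F = X) :
    ∀ (n : ℕ) (q : Polynomial ℂ), q.Monic → q.natDegree = n →
      (n.factorial : ℂ) •
          ((n.factorial : ℂ) •
            ∑ k ∈ range (n + 1),
              (coeff n (H ^ k) / (k.factorial : ℂ)) • (Polynomial.X ^ k : Polynomial ℂ)) =
        fallOp (LOp f) n q := by
  intro n q hq hqn
  rw [coeff_zero_eq_constantCoeff_apply] at hF0 hH0
  have hfH : f.subst H = X * d⁄dX ℂ H :=
    subst_eq_X_mul_derivative hF0 (hF1 ▸ isUnit_one) hH0 hF (pcomp_eq_subst hF0 ▸ hH)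
  set P := binomialTypePoly H n
  have hlow : (q - P).degree < n := hqn ▸ degree_sub_lt_of_monic hq
    (binomialTypePoly_monic hH0 hH1 n) (by rw [hqn, natDegree_binomialTypePoly hH0 hH1])
  have hfall : fallOp (LOp f) n = Polynomial.aeval (LOpLinear f) (descPochhammer ℂ n) :=
    fallOp_eq_aeval_descPochhammer (LOpLinear f) n
  calc (n.factorial : ℂ) • P
      = fallOp (LOp f) n P := by
        rw [hfall, Module.End.aeval_apply_of_mem_apply_eq_smul (LOp_binomialTypePoly hH0 hfH n),
          descPochhammer_eval_eq_descFactorial, Nat.descFactorial_self]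
    _ = fallOp (LOp f) n q := by
        rw [← add_sub_cancel P q, hfall, map_add, ← hfall,
          fallOp_eq_zero_of_degree_lt (fun m _ => degree_LOp_sub_lt hf0 hf1) n _ hlow, add_zero]
end
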